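/- Let d ≥ 1, α > 0, A ≥ 0, B ≥ 0, M ≥ 0, L ≥ 0. Let ψ : ℝ → ℝ be a C¹, ℤ-periodic, nonnegative function with sup|ψ| ≤ A and sup|ψ'| ≤ B, and set φ = α + ψ. Let h : ℝ^d → ℝ be measurable with sup|h| ≤ M and Lipschitz with constant L. For a probability measure ν on ℝ^d define F_ν(x) = (∫ φ(x − z¹) h(z) dν(z)) / (∫ φ(x − z¹) dν(z)) for x ∈ ℝ. Then there exists a constant K, depending only on α, A, B, M and L, such that for all probability measures ν₁, ν₂ on ℝ^d, every coupling π of ν₁ and ν₂ (probability measure on ℝ^d×ℝ^d with marginals ν₁ and ν₂), and all x, y ∈ ℝ: |F_{ν₁}(x) − F_{ν₂}(y)| ≤ K ( min(1, |x−y|) + ∫ min(1, |a−b|) dπ(a,b) ). -/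

import Mathlib

open MeasureTheory NNReal

/-!
Write `F_ν(x) = N / D` with `D ≥ α` and `|N| ≤ M D`; then
`|N₁ / D₁ - N₂ / D₂| ≤ (|N₁ - N₂| + M |D₁ - D₂|) / α`. Since `π` couples `ν₁` and `ν₂`, both
differences are integrals over `π` of pointwise differences at `(a, b)`. A function that is
`K`-Lipschitz with oscillation at most `C` satisfies `|f u - f v| ≤ max K C · min(1, |u - v|)`,
and `z ↦ z¹` is `1`-Lipschitz, so with `min(1, s + t) ≤ min(1, s) + min(1, t)` every pointwise
difference is at most a constant times `min(1, |x - y|) + min(1, ‖a - b‖)`.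
-/

lemma min_one_add_le {s t : ℝ} (hs : 0 ≤ s) (ht : 0 ≤ t) :
    min 1 (s + t) ≤ min 1 s + min 1 t := by
  rcases min_cases 1 s with ⟨hs', -⟩ | ⟨hs', -⟩ <;>
    rcases min_cases 1 t with ⟨ht', -⟩ | ⟨ht', -⟩ <;>
    rw [hs', ht'] <;> linarith [min_le_left 1 (s + t), min_le_right 1 (s + t)]

lemma LipschitzWith.dist_le_mul_min_one {X Y : Type*} [PseudoMetricSpace X]
    [PseudoMetricSpace Y] {f : X → Y} {K : ℝ≥0} {C : ℝ} (hf : LipschitzWith K f)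
    (hC : ∀ a b, dist (f a) (f b) ≤ C) (a b : X) :
    dist (f a) (f b) ≤ max (K : ℝ) C * min 1 (dist a b) := by
  rcases le_total (dist a b) 1 with hab | hab
  · rw [min_eq_right hab]
    exact (hf.dist_le_mul a b).trans (by gcongr; exact le_max_left _ _)
  · rw [min_eq_left hab, mul_one]
    exact (hC a b).trans (le_max_right _ _)

lemma abs_mul_sub_mul_le {a₁ a₂ b₁ b₂ M β : ℝ} (hb₁ : |b₁| ≤ M) (ha₂ : |a₂| ≤ β) :
    |a₁ * b₁ - a₂ * b₂| ≤ M * |a₁ - a₂| + β * |b₁ - b₂| := by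
  calc |a₁ * b₁ - a₂ * b₂| = |(a₁ - a₂) * b₁ + a₂ * (b₁ - b₂)| := by ring_nf
    _ ≤ |a₁ - a₂| * |b₁| + |a₂| * |b₁ - b₂| := by
        rw [← abs_mul, ← abs_mul]; exact abs_add_le _ _
    _ ≤ M * |a₁ - a₂| + β * |b₁ - b₂| := by rw [mul_comm M]; gcongr

lemma abs_div_sub_div_le {α M N₁ D₁ N₂ D₂ : ℝ} (hα : 0 < α) (hD₁ : α ≤ D₁) (hD₂ : α ≤ D₂)
    (hN₂ : |N₂| ≤ M * D₂) :
    |N₁ / D₁ - N₂ / D₂| ≤ (|N₁ - N₂| + M * |D₁ - D₂|) / α := by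
  have hD₁' : 0 < D₁ := hα.trans_le hD₁
  have hD₂' : 0 < D₂ := hα.trans_le hD₂
  have hq : |N₂ / D₂| ≤ M := by rwa [abs_div, abs_of_pos hD₂', div_le_iff₀ hD₂']
  calc |N₁ / D₁ - N₂ / D₂| = |(N₁ - N₂) + N₂ / D₂ * (D₂ - D₁)| / D₁ := by
        rw [← abs_of_pos hD₁', ← abs_div, abs_of_pos hD₁']; congr 1; field_simp; ring
    _ ≤ (|N₁ - N₂| + M * |D₁ - D₂|) / D₁ := by
        gcongr
        refine (abs_add_le _ _).trans (add_le_add_right ?_ _)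
        rw [abs_mul, abs_sub_comm]; exact mul_le_mul_of_nonneg_right hq (abs_nonneg _)
    _ ≤ (|N₁ - N₂| + M * |D₁ - D₂|) / α := by
        gcongr
        exact add_nonneg (abs_nonneg _) (mul_nonneg ((abs_nonneg _).trans hq) (abs_nonneg _))

section integral

variable {X : Type*} [MeasurableSpace X]

lemma le_integral_of_forall_le {ν : Measure X} [IsProbabilityMeasure ν] {w : X → ℝ} {α : ℝ}
    (hw : Integrable w ν) (hαw : ∀ z, α ≤ w z) : α ≤ ∫ z, w z ∂ν := by
  simpa using integral_mono (integrable_const α) hw hαw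

lemma abs_integral_mul_le_mul_integral {ν : Measure X} {w g : X → ℝ} {M : ℝ}
    (hw : Integrable w ν) (hw₀ : ∀ z, 0 ≤ w z) (hg : ∀ z, |g z| ≤ M) :
    |∫ z, w z * g z ∂ν| ≤ M * ∫ z, w z ∂ν := by
  rw [← integral_const_mul, ← Real.norm_eq_abs]
  refine norm_integral_le_of_norm_le (hw.const_mul M) (ae_of_all _ fun z => ?_)
  rw [Real.norm_eq_abs, abs_mul, abs_of_nonneg (hw₀ z), mul_comm]
  exact mul_le_mul_of_nonneg_right (hg z) (hw₀ z)

lemma abs_integral_sub_integral_le_of_coupling {Y : Type*} [MeasurableSpace Y]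
    {π : Measure (X × Y)} {f : X → ℝ} {g : Y → ℝ} {k : X × Y → ℝ}
    (hf : Integrable f (π.map Prod.fst)) (hg : Integrable g (π.map Prod.snd))
    (hk : Integrable k π) (hfg : ∀ p : X × Y, |f p.1 - g p.2| ≤ k p) :
    |∫ a, f a ∂π.map Prod.fst - ∫ b, g b ∂π.map Prod.snd| ≤ ∫ p, k p ∂π := by
  have hf' : Integrable (fun p : X × Y => f p.1) π := hf.comp_measurable measurable_fst
  have hg' : Integrable (fun p : X × Y => g p.2) π := hg.comp_measurable measurable_snd
  rw [integral_map measurable_fst.aemeasurable hf.aestronglyMeasurable,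
    integral_map measurable_snd.aemeasurable hg.aestronglyMeasurable, ← integral_sub hf' hg',
    ← Real.norm_eq_abs]
  exact norm_integral_le_of_norm_le hk (ae_of_all _ hfg)

lemma abs_integral_sub_integral_le_of_coupling_of_le [PseudoMetricSpace X]
    [OpensMeasurableSpace X] [SecondCountableTopology X] {π : Measure (X × X)}
    [IsProbabilityMeasure π] {f g : X → ℝ} {C m : ℝ}
    (hf : Integrable f (π.map Prod.fst)) (hg : Integrable g (π.map Prod.snd))
    (hfg : ∀ a b, |f a - g b| ≤ C * (m + min 1 (dist a b))) :
    |∫ a, f a ∂π.map Prod.fst - ∫ b, g b ∂π.map Prod.snd| ≤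
      C * (m + ∫ p, min 1 (dist p.1 p.2) ∂π) := by
  have hw : Integrable (fun p : X × X => min 1 (dist p.1 p.2)) π := by
    refine Integrable.of_bound (by fun_prop) 1 (ae_of_all _ fun p => ?_)
    rw [Real.norm_of_nonneg (le_min zero_le_one dist_nonneg)]
    exact min_le_left _ _
  refine (abs_integral_sub_integral_le_of_coupling hf hg
    (((integrable_const m).add hw).const_mul C) fun p => hfg p.1 p.2).trans_eq ?_
  rw [integral_const_mul]
  simp only [Pi.add_apply]
  rw [integral_add (integrable_const m) hw, integral_const]
  simp

end integral

section drift

variable {X : Type*} [PseudoMetricSpace X] {φ : ℝ → ℝ} {c h : X → ℝ} {α β M : ℝ}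
  {Kφ Kh : ℝ≥0}

lemma abs_sub_sub_le_mul_min_one (hφ : ∀ u, φ u ∈ Set.Icc α β) (hφL : LipschitzWith Kφ φ)
    (hc : LipschitzWith 1 c) (x y : ℝ) (a b : X) :
    |φ (x - c a) - φ (y - c b)| ≤
      max (Kφ : ℝ) (β - α) * (min 1 |x - y| + min 1 (dist a b)) := by
  have hca : |c a - c b| ≤ dist a b := by simpa [Real.dist_eq] using hc.dist_le_mul a b
  calc |φ (x - c a) - φ (y - c b)|
      ≤ max (Kφ : ℝ) (β - α) * min 1 |(x - c a) - (y - c b)| :=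
        hφL.dist_le_mul_min_one (fun u v => Real.dist_le_of_mem_Icc (hφ u) (hφ v)) _ _
    _ ≤ max (Kφ : ℝ) (β - α) * (min 1 |x - y| + min 1 (dist a b)) := by
        gcongr
        calc min 1 |(x - c a) - (y - c b)| ≤ min 1 (|x - y| + |c a - c b|) := by
              gcongr
              rw [show x - c a - (y - c b) = (x - y) - (c a - c b) by ring]
              exact abs_sub _ _
          _ ≤ min 1 |x - y| + min 1 (dist a b) :=
              (min_one_add_le (abs_nonneg _) (abs_nonneg _)).trans (by gcongr)

lemma abs_mul_sub_sub_mul_le_mul_min_one (hα : 0 ≤ α) (hφ : ∀ u, φ u ∈ Set.Icc α β)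
    (hφL : LipschitzWith Kφ φ) (hc : LipschitzWith 1 c) (hh : ∀ z, |h z| ≤ M)
    (hhL : LipschitzWith Kh h) (x y : ℝ) (a b : X) :
    |φ (x - c a) * h a - φ (y - c b) * h b| ≤
      (M * max (Kφ : ℝ) (β - α) + β * max (Kh : ℝ) (2 * M)) *
        (min 1 |x - y| + min 1 (dist a b)) := by
  have hφβ : |φ (y - c b)| ≤ β :=
    (abs_of_nonneg (hα.trans (hφ _).1)).trans_le (hφ _).2
  have hβ : 0 ≤ β := (abs_nonneg _).trans hφβ
  have hM : 0 ≤ M := (abs_nonneg _).trans (hh a)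
  have hhd : |h a - h b| ≤ max (Kh : ℝ) (2 * M) * min 1 (dist a b) :=
    hhL.dist_le_mul_min_one (fun a b => (abs_sub _ _).trans (by linarith [hh a, hh b])) a b
  have hm : 0 ≤ β * max (Kh : ℝ) (2 * M) * min 1 |x - y| :=
    mul_nonneg (mul_nonneg hβ (le_max_of_le_left Kh.2))
      (le_min zero_le_one (abs_nonneg _))
  calc |φ (x - c a) * h a - φ (y - c b) * h b|
      ≤ M * |φ (x - c a) - φ (y - c b)| + β * |h a - h b| := abs_mul_sub_mul_le (hh a) hφβ
    _ ≤ M * (max (Kφ : ℝ) (β - α) * (min 1 |x - y| + min 1 (dist a b))) +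
          β * (max (Kh : ℝ) (2 * M) * min 1 (dist a b)) := by
        gcongr
        exact abs_sub_sub_le_mul_min_one hφ hφL hc x y a b
    _ ≤ _ := by linarith

variable [MeasurableSpace X]

/-- The paper's `F_ν(x)`, with `φ (x - c z)` in place of `φ (x - z¹)`. -/
noncomputable def nadarayaWatson (φ : ℝ → ℝ) (c h : X → ℝ) (ν : Measure X) (x : ℝ) : ℝ :=
  (∫ z, φ (x - c z) * h z ∂ν) / ∫ z, φ (x - c z) ∂ν

lemma abs_nadarayaWatson_sub_le_of_coupling [OpensMeasurableSpace X]
    [SecondCountableTopology X] {π : Measure (X × X)} [IsProbabilityMeasure π] (hα : 0 < α)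
    (hφ : ∀ u, φ u ∈ Set.Icc α β) (hφL : LipschitzWith Kφ φ) (hc : LipschitzWith 1 c)
    (hh : ∀ z, |h z| ≤ M) (hhL : LipschitzWith Kh h) (x y : ℝ) :
    |nadarayaWatson φ c h (π.map Prod.fst) x - nadarayaWatson φ c h (π.map Prod.snd) y| ≤
      (2 * M * max (Kφ : ℝ) (β - α) + β * max (Kh : ℝ) (2 * M)) / α *
        (min 1 |x - y| + ∫ p, min 1 (dist p.1 p.2) ∂π) := by
  set Cφ := max (Kφ : ℝ) (β - α)
  set Ch := max (Kh : ℝ) (2 * M)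
  set m := min 1 |x - y|
  set W := ∫ p, min 1 (dist p.1 p.2) ∂π
  obtain ⟨p₀⟩ := nonempty_of_isProbabilityMeasure π
  have hM : 0 ≤ M := (abs_nonneg _).trans (hh p₀.1)
  have hφ₀ : ∀ u, 0 ≤ φ u := fun u => hα.le.trans (hφ u).1
  have hw : ∀ (ν : Measure X) [IsProbabilityMeasure ν] t,
      Integrable (fun z => φ (t - c z)) ν := fun ν _ t =>
    .of_bound (hφL.continuous.comp (continuous_const.sub hc.continuous)).aestronglyMeasurable β
      (ae_of_all _ fun z => (abs_of_nonneg (hφ₀ _)).trans_le (hφ _).2)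
  have hwh : ∀ (ν : Measure X) [IsProbabilityMeasure ν] t,
      Integrable (fun z => φ (t - c z) * h z) ν := fun ν _ t =>
    (hw ν t).mul_bdd hhL.continuous.aestronglyMeasurable (ae_of_all _ hh)
  have : IsProbabilityMeasure (π.map Prod.fst) :=
    Measure.isProbabilityMeasure_map measurable_fst.aemeasurable
  have : IsProbabilityMeasure (π.map Prod.snd) :=
    Measure.isProbabilityMeasure_map measurable_snd.aemeasurable
  have hΔD := abs_integral_sub_integral_le_of_coupling_of_le (π := π) (hw _ x) (hw _ y)
    (abs_sub_sub_le_mul_min_one hφ hφL hc x y)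
  have hΔN := abs_integral_sub_integral_le_of_coupling_of_le (π := π) (hwh _ x) (hwh _ y)
    (abs_mul_sub_sub_mul_le_mul_min_one hα.le hφ hφL hc hh hhL x y)
  unfold nadarayaWatson
  calc _ ≤ _ := abs_div_sub_div_le hα (le_integral_of_forall_le (hw _ x) fun z => (hφ _).1)
        (le_integral_of_forall_le (hw _ y) fun z => (hφ _).1)
        (abs_integral_mul_le_mul_integral (hw _ y) (fun z => hφ₀ _) hh)
    _ ≤ ((M * Cφ + β * Ch) * (m + W) + M * (Cφ * (m + W))) / α := by gcongr
    _ = _ := by ring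

end drift

theorem stmt12_general (α : ℝ) (hα : 0 < α) (A B M L : ℝ) :
    ∃ K : ℝ, 0 < K ∧
      ∀ (d : ℕ) (hd : 0 < d) (ψ : ℝ → ℝ), ContDiff ℝ 1 ψ → (∀ x, 0 ≤ ψ x) →
        (∀ x, ψ (x + 1) = ψ x) → (∀ x, |ψ x| ≤ A) → (∀ x, |deriv ψ x| ≤ B) →
      ∀ h : EuclideanSpace ℝ (Fin d) → ℝ, Measurable h → (∀ z, |h z| ≤ M) →
        LipschitzWith (Real.toNNReal L) h →
      ∀ (ν₁ ν₂ : Measure (EuclideanSpace ℝ (Fin d))),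
        IsProbabilityMeasure ν₁ → IsProbabilityMeasure ν₂ →
      ∀ (π : Measure (EuclideanSpace ℝ (Fin d) × EuclideanSpace ℝ (Fin d))),
        IsProbabilityMeasure π → π.map Prod.fst = ν₁ → π.map Prod.snd = ν₂ →
      ∀ x y : ℝ,
        |(∫ z, (α + ψ (x - z ⟨0, hd⟩)) * h z ∂ν₁) /
            (∫ z, (α + ψ (x - z ⟨0, hd⟩)) ∂ν₁) -
          (∫ z, (α + ψ (y - z ⟨0, hd⟩)) * h z ∂ν₂) /
            (∫ z, (α + ψ (y - z ⟨0, hd⟩)) ∂ν₂)| ≤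
        K * (min 1 |x - y| + ∫ p, min 1 ‖p.1 - p.2‖ ∂π) := by
  set K := (2 * M * max (B.toNNReal : ℝ) A + (α + A) * max (L.toNNReal : ℝ) (2 * M)) / α
  refine ⟨max K 1, lt_max_of_lt_right one_pos, ?_⟩
  intro d hd ψ hψ hψ₀ _ hψA hψ' h _ hhM hhL ν₁ ν₂ _ _ π _ hπ₁ hπ₂ x y
  subst hπ₁ hπ₂
  have hφ : ∀ u, α + ψ u ∈ Set.Icc α (α + A) :=
    fun u => ⟨le_add_of_nonneg_right (hψ₀ u), add_le_add_right (abs_le.1 (hψA u)).2 α⟩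
  have hφL : LipschitzWith B.toNNReal fun u => α + ψ u := by
    refine lipschitzWith_of_nnnorm_deriv_le
      ((hψ.differentiable one_ne_zero).const_add α) fun u => ?_
    rw [deriv_const_add, ← NNReal.coe_le_coe, coe_nnnorm, Real.norm_eq_abs]
    exact (hψ' u).trans (Real.le_coe_toNNReal B)
  have hc : LipschitzWith 1 fun z : EuclideanSpace ℝ (Fin d) => z ⟨0, hd⟩ :=
    LipschitzWith.of_dist_le_mul fun a b => by simpa using PiLp.dist_apply_le a b ⟨0, hd⟩
  have key := abs_nadarayaWatson_sub_le_of_coupling (π := π) hα hφ hφL hc hhM hhL x y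
  simp only [add_sub_cancel_left, dist_eq_norm] at key
  exact key.trans (mul_le_mul_of_nonneg_right (le_max_left _ _) (by positivity))

/-- Lipschitz stability of the regularized Nadaraya–Watson drift:
with `φ = α + ψ` (`α > 0`, `ψ ≥ 0` of class `C¹`, `ℤ`-periodic, `sup|ψ| ≤ A`,
`sup|ψ'| ≤ B`) and `h` bounded by `M` and `L`-Lipschitz, setting
`F_ν(x) = (∫ φ(x - z¹) h(z) dν(z)) / (∫ φ(x - z¹) dν(z))`, there is a constant `K`
depending only on `α, A, B, M, L` such that for all probability measures `ν₁, ν₂`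
on `ℝ^d`, every coupling `π` of `ν₁` and `ν₂`, and all `x, y ∈ ℝ`,
`|F_{ν₁}(x) - F_{ν₂}(y)| ≤ K (min(1,|x-y|) + ∫ min(1,|a-b|) dπ(a,b))`. -/
theorem stmt12 (α : ℝ) (hα : 0 < α) (A B M L : ℝ)
    (hA : 0 ≤ A) (hB : 0 ≤ B) (hM : 0 ≤ M) (hL : 0 ≤ L) :
    ∃ K : ℝ, 0 < K ∧
      ∀ (d : ℕ) (hd : 0 < d) (ψ : ℝ → ℝ), ContDiff ℝ 1 ψ → (∀ x, 0 ≤ ψ x) →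
        (∀ x, ψ (x + 1) = ψ x) → (∀ x, |ψ x| ≤ A) → (∀ x, |deriv ψ x| ≤ B) →
      ∀ h : EuclideanSpace ℝ (Fin d) → ℝ, Measurable h → (∀ z, |h z| ≤ M) →
        LipschitzWith (Real.toNNReal L) h →
      ∀ (ν₁ ν₂ : Measure (EuclideanSpace ℝ (Fin d))),
        IsProbabilityMeasure ν₁ → IsProbabilityMeasure ν₂ →
      ∀ (π : Measure (EuclideanSpace ℝ (Fin d) × EuclideanSpace ℝ (Fin d))),
        IsProbabilityMeasure π → π.map Prod.fst = ν₁ → π.map Prod.snd = ν₂ →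
      ∀ x y : ℝ,
        |(∫ z, (α + ψ (x - z ⟨0, hd⟩)) * h z ∂ν₁) /
            (∫ z, (α + ψ (x - z ⟨0, hd⟩)) ∂ν₁) -
          (∫ z, (α + ψ (y - z ⟨0, hd⟩)) * h z ∂ν₂) /
            (∫ z, (α + ψ (y - z ⟨0, hd⟩)) ∂ν₂)| ≤
        K * (min 1 |x - y| + ∫ p, min 1 ‖p.1 - p.2‖ ∂π) :=
  stmt12_general α hα A B M L
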